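/- Let F be a field, let M be an n×m matrix over F and let R be the rook matrix of M. Let J_n denote the n×n reversal permutation matrix (the permutation matrix of i ↦ n+1−i). Then the rook matrix of the m×n matrix J_m · Mᵀ · J_n equals J_m · Rᵀ · J_n. (The rook matrix of the transpose with reversed row and column orders is the correspondingly reversed transpose of the rook matrix.) -/

import Mathlib

/-- A square matrix is unitriangular if it is upper triangular with 1's on the diagonal. -/
def Matrix.IsUnitriangular {n : ℕ} {R : Type*} [Zero R] [One R]
    (A : Matrix (Fin n) (Fin n) R) : Prop :=
  (∀ i, A i i = 1) ∧ ∀ i j : Fin n, j < i → A i j = 0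

/-- A matrix is a rook matrix if every row and every column contains
at most one nonzero entry. -/
def Matrix.IsRook {n m : ℕ} {F : Type*} [Zero F]
    (R : Matrix (Fin n) (Fin m) F) : Prop :=
  (∀ i j j', R i j ≠ 0 → R i j' ≠ 0 → j = j') ∧
  (∀ i i' j, R i j ≠ 0 → R i' j ≠ 0 → i = i')

/-- The reversal permutation matrix `J_n`, the permutation matrix of `i ↦ n + 1 - i`. -/
def revMatrix (n : ℕ) (F : Type*) [Zero F] [One F] : Matrix (Fin n) (Fin n) F :=
  Matrix.of fun i j => if j = i.rev then 1 else 0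

/-!
The map `X ↦ J Xᵀ J` (transpose, then reverse the order of rows and of columns) reverses
products, since `J * J = 1`, and it preserves both unitriangular and rook matrices. Hence it
carries the double coset `T_n M T_m` onto `T_m (J Mᵀ J) T_n`, and the theorem reduces to the
uniqueness of the rook matrix in a double coset.

For uniqueness it suffices to show `R = S` whenever `A * R = S * B` with `R`, `S` rook, `A`
with unit diagonal and `B` unitriangular. If `R k l ≠ 0` but `S k l ≠ R k l`, row `k` of
`S * B` is nonzero in column `l`, so (`B` being upper triangular) `S k j ≠ 0` for some `j < l`;
column `j` of `A * R` is then nonzero, which produces a nonzero `R p j` with `p ≠ k` and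
`S p j = 0`. This is a defect of the same kind strictly further left, so there is none. Then
`S` has no further nonzero entries, since each of them shares its column with one of `R`.
-/

namespace Matrix

theorem exists_ne_zero_of_mul_apply_ne_zero {α ι κ μ : Type*} [NonUnitalNonAssocSemiring α]
    [Fintype κ] {A : Matrix ι κ α} {B : Matrix κ μ α} {i : ι} {j : μ} (h : (A * B) i j ≠ 0) :
    ∃ k, A i k ≠ 0 ∧ B k j ≠ 0 := by
  obtain ⟨k, -, hk⟩ := Finset.exists_ne_zero_of_sum_ne_zero (mul_apply (M := A) ▸ h)
  exact ⟨k, left_ne_zero_of_mul hk, right_ne_zero_of_mul hk⟩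

theorem IsUpperTriangular.mul_apply_self {α ι : Type*} [NonUnitalNonAssocSemiring α] [Fintype ι]
    [LinearOrder ι] {A B : Matrix ι ι α} (hA : A.IsUpperTriangular) (hB : B.IsUpperTriangular)
    (i : ι) : (A * B) i i = A i i * B i i := by
  refine (mul_apply ..).trans (Fintype.sum_eq_single i fun k hki => ?_)
  rcases hki.lt_or_gt with hki | hik
  · rw [hA hki, zero_mul]
  · rw [hB hik, mul_zero]

section Unitriangular

variable {α : Type*} {n : ℕ}

theorem IsUnitriangular.isUpperTriangular [Zero α] [One α] {A : Matrix (Fin n) (Fin n) α}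
    (hA : A.IsUnitriangular) : A.IsUpperTriangular :=
  fun i j => hA.2 i j

theorem IsUnitriangular.mul [Semiring α] {A B : Matrix (Fin n) (Fin n) α}
    (hA : A.IsUnitriangular) (hB : B.IsUnitriangular) : (A * B).IsUnitriangular :=
  ⟨fun i => by rw [hA.isUpperTriangular.mul_apply_self hB.isUpperTriangular, hA.1, hB.1, one_mul],
    fun _ _ h => hA.isUpperTriangular.mul hB.isUpperTriangular h⟩

theorem IsUnitriangular.det_eq_one [CommRing α] {A : Matrix (Fin n) (Fin n) α}
    (hA : A.IsUnitriangular) : A.det = 1 := by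
  simp [det_of_isUpperTriangular hA.isUpperTriangular, hA.1]

theorem IsUnitriangular.isUnit_det [CommRing α] {A : Matrix (Fin n) (Fin n) α}
    (hA : A.IsUnitriangular) : IsUnit A.det :=
  hA.det_eq_one ▸ isUnit_one

theorem IsUnitriangular.inv [CommRing α] {A : Matrix (Fin n) (Fin n) α}
    (hA : A.IsUnitriangular) : A⁻¹.IsUnitriangular := by
  have := A.invertibleOfIsUnitDet hA.isUnit_det
  have hU : A⁻¹.IsUpperTriangular := blockTriangular_inv_of_blockTriangular hA.isUpperTriangular
  refine ⟨fun i => ?_, fun _ _ h => hU h⟩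
  simpa [hU.mul_apply_self hA.isUpperTriangular, hA.1] using
    congr_fun (congr_fun (nonsing_inv_mul A hA.isUnit_det) i) i

end Unitriangular

section Rook

variable {α : Type*} [Semiring α] {n m : ℕ}

theorem IsRook.mul_apply_of_ne_zero {R : Matrix (Fin n) (Fin m) α} (hR : R.IsRook) {k : Fin n}
    {l : Fin m} (hkl : R k l ≠ 0) (A : Matrix (Fin n) (Fin n) α) (i : Fin n) :
    (A * R) i l = A i k * R k l := by
  refine (mul_apply ..).trans (Fintype.sum_eq_single k fun p hpk => ?_)
  by_cases hpl : R p l = 0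
  · rw [hpl, mul_zero]
  · exact absurd (hR.2 p k l hpl hkl) hpk

theorem IsRook.apply_mul_of_ne_zero {S : Matrix (Fin n) (Fin m) α} (hS : S.IsRook) {k : Fin n}
    {l : Fin m} (hkl : S k l ≠ 0) (B : Matrix (Fin m) (Fin m) α) (j : Fin m) :
    (S * B) k j = S k l * B l j := by
  refine (mul_apply ..).trans (Fintype.sum_eq_single l fun p hpl => ?_)
  by_cases hkp : S k p = 0
  · rw [hkp, zero_mul]
  · exact absurd (hS.1 k p l hkp hkl) hpl

theorem IsRook.eq_of_mul_eq_mul {A : Matrix (Fin n) (Fin n) α} {B : Matrix (Fin m) (Fin m) α}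
    {R S : Matrix (Fin n) (Fin m) α} (hR : R.IsRook) (hS : S.IsRook) (hA : ∀ i, A i i = 1)
    (hB : B.IsUnitriangular) (h : A * R = S * B) : R = S := by
  have hcol : ∀ {i j}, S i j ≠ 0 → ∃ p, R p j ≠ 0 := fun {i j} hij => by
    have : (A * R) i j ≠ 0 := by rwa [h, hS.apply_mul_of_ne_zero hij, hB.1, mul_one]
    exact (exists_ne_zero_of_mul_apply_ne_zero this).imp fun _ => And.right
  have hpivot : ∀ l k, R k l ≠ 0 → S k l = R k l := by
    intro l
    induction l using WellFoundedLT.induction with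
    | ind l ih =>
      intro k hkl
      by_contra hne
      have : (S * B) k l ≠ 0 := by rwa [← h, hR.mul_apply_of_ne_zero hkl, hA, one_mul]
      obtain ⟨j, hkj, hjl⟩ := exists_ne_zero_of_mul_apply_ne_zero this
      replace hjl : j ≤ l := not_lt.1 fun hlj => hjl (hB.2 j l hlj)
      rcases hjl.lt_or_eq with hjl | rfl
      · obtain ⟨p, hpj⟩ := hcol hkj
        have hpk : p ≠ k := by
          rintro rfl
          exact hjl.ne (hR.1 p j l hpj hkl)
        exact hpk (hS.2 p k j (ih j hjl p hpj ▸ hpj) hkj)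
      · refine hne ?_
        calc S k j = (S * B) k j := by rw [hS.apply_mul_of_ne_zero hkj, hB.1, mul_one]
          _ = R k j := by rw [← h, hR.mul_apply_of_ne_zero hkl, hA, one_mul]
  ext i j
  by_cases hij : R i j = 0
  · by_contra hne
    have hSij : S i j ≠ 0 := hij ▸ Ne.symm hne
    obtain ⟨p, hpj⟩ := hcol hSij
    obtain rfl : p = i := hS.2 p i j (hpivot j p hpj ▸ hpj) hSij
    exact hpj hij
  · exact (hpivot j i hij).symm

end Rook

theorem IsRook.eq_of_mul_mul_eq {α : Type*} [CommRing α] {n m : ℕ}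
    {M R S : Matrix (Fin n) (Fin m) α} {A₁ A₂ : Matrix (Fin n) (Fin n) α}
    {B₁ B₂ : Matrix (Fin m) (Fin m) α} (hR : R.IsRook) (hS : S.IsRook)
    (hA₁ : A₁.IsUnitriangular) (hB₁ : B₁.IsUnitriangular) (hA₂ : A₂.IsUnitriangular)
    (hB₂ : B₂.IsUnitriangular) (h₁ : A₁ * M * B₁ = R) (h₂ : A₂ * M * B₂ = S) : R = S := by
  refine hR.eq_of_mul_eq_mul hS (hA₂.mul hA₁.inv).1 (hB₂.inv.mul hB₁) ?_
  calc A₂ * A₁⁻¹ * R = A₂ * (A₁⁻¹ * A₁) * M * B₁ := by simp only [← h₁, Matrix.mul_assoc]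
    _ = A₂ * M * (B₂ * B₂⁻¹) * B₁ := by
      simp only [nonsing_inv_mul _ hA₁.isUnit_det, mul_nonsing_inv _ hB₂.isUnit_det, Matrix.mul_one]
    _ = S * (B₂⁻¹ * B₁) := by simp only [← h₂, Matrix.mul_assoc]

section Reversal

variable {α : Type*} {n m : ℕ}

theorem revMatrix_mul [NonAssocSemiring α] {ι : Type*} (X : Matrix (Fin n) ι α) :
    revMatrix n α * X = X.submatrix Fin.rev id := by
  ext i j
  simp [mul_apply, revMatrix]

theorem mul_revMatrix [NonAssocSemiring α] {ι : Type*} (X : Matrix ι (Fin n) α) :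
    X * revMatrix n α = X.submatrix id Fin.rev := by
  ext i j
  simp [mul_apply, revMatrix, eq_comm (a := j), Fin.rev_eq_iff]

theorem revMatrix_mul_revMatrix [NonAssocSemiring α] : revMatrix n α * revMatrix n α = 1 := by
  ext i j
  rw [revMatrix_mul]
  simp [revMatrix, one_apply, eq_comm]

theorem revMatrix_mul_transpose_mul_revMatrix [NonAssocSemiring α] (X : Matrix (Fin n) (Fin m) α) :
    revMatrix m α * Xᵀ * revMatrix n α = Xᵀ.submatrix Fin.rev Fin.rev := by
  rw [revMatrix_mul, mul_revMatrix]
  rfl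

theorem revMatrix_mul_transpose_mul_revMatrix_mul [CommSemiring α] {k : ℕ}
    (X : Matrix (Fin n) (Fin m) α) (Y : Matrix (Fin m) (Fin k) α) :
    revMatrix k α * (X * Y)ᵀ * revMatrix n α =
      (revMatrix k α * Yᵀ * revMatrix m α) * (revMatrix m α * Xᵀ * revMatrix n α) := by
  simp only [transpose_mul, Matrix.mul_assoc, ← Matrix.mul_assoc (revMatrix m α) (revMatrix m α),
    revMatrix_mul_revMatrix, Matrix.one_mul]

theorem IsRook.submatrix [Zero α] {n' m' : ℕ} {R : Matrix (Fin n) (Fin m) α} (hR : R.IsRook)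
    {f : Fin n' → Fin n} {g : Fin m' → Fin m} (hf : f.Injective) (hg : g.Injective) :
    (R.submatrix f g).IsRook :=
  ⟨fun i _ _ h h' => hg (hR.1 (f i) _ _ h h'), fun _ _ j h h' => hf (hR.2 _ _ (g j) h h')⟩

theorem IsRook.transpose [Zero α] {R : Matrix (Fin n) (Fin m) α} (hR : R.IsRook) : Rᵀ.IsRook :=
  ⟨fun i _ _ h h' => hR.2 _ _ i h h', fun _ _ j h h' => hR.1 j _ _ h h'⟩

theorem IsRook.revMatrix_mul_transpose_mul_revMatrix [NonAssocSemiring α]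
    {R : Matrix (Fin n) (Fin m) α} (hR : R.IsRook) :
    (revMatrix m α * Rᵀ * revMatrix n α).IsRook := by
  rw [Matrix.revMatrix_mul_transpose_mul_revMatrix]
  exact hR.transpose.submatrix Fin.rev_injective Fin.rev_injective

theorem IsUnitriangular.revMatrix_mul_transpose_mul_revMatrix [NonAssocSemiring α]
    {A : Matrix (Fin n) (Fin n) α} (hA : A.IsUnitriangular) :
    (revMatrix n α * Aᵀ * revMatrix n α).IsUnitriangular := by
  rw [Matrix.revMatrix_mul_transpose_mul_revMatrix]
  exact ⟨fun i => hA.1 i.rev, fun i j hji => hA.2 j.rev i.rev (Fin.rev_lt_rev.2 hji)⟩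

end Reversal

end Matrix

/-- The rook matrix of `J_m * M.transpose * J_n` is `J_m * R.transpose * J_n`, where `R` is the rook
matrix of `M`. -/
theorem rook_matrix_transpose_rev {F : Type*} [Field F] {n m : ℕ}
    (M R : Matrix (Fin n) (Fin m) F) (hRrook : R.IsRook)
    (hRorb : ∃ (A : Matrix (Fin n) (Fin n) F) (B : Matrix (Fin m) (Fin m) F),
      A.IsUnitriangular ∧ B.IsUnitriangular ∧ A * M * B = R)
    (R' : Matrix (Fin m) (Fin n) F) (hR'rook : R'.IsRook)
    (hR'orb : ∃ (A : Matrix (Fin m) (Fin m) F) (B : Matrix (Fin n) (Fin n) F),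
      A.IsUnitriangular ∧ B.IsUnitriangular ∧
      A * (revMatrix m F * M.transpose * revMatrix n F) * B = R') :
    R' = revMatrix m F * R.transpose * revMatrix n F := by
  obtain ⟨A, B, hA, hB, rfl⟩ := hRorb
  obtain ⟨A', B', hA', hB', hR'⟩ := hR'orb
  have hflip : revMatrix m F * (A * M * B).transpose * revMatrix n F =
      (revMatrix m F * B.transpose * revMatrix m F) *
        (revMatrix m F * M.transpose * revMatrix n F) *
          (revMatrix n F * A.transpose * revMatrix n F) := by
    rw [Matrix.revMatrix_mul_transpose_mul_revMatrix_mul,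
      Matrix.revMatrix_mul_transpose_mul_revMatrix_mul,
      Matrix.mul_assoc _ (revMatrix m F * M.transpose * revMatrix n F)]
  exact hR'rook.eq_of_mul_mul_eq hRrook.revMatrix_mul_transpose_mul_revMatrix hA' hB'
    hB.revMatrix_mul_transpose_mul_revMatrix hA.revMatrix_mul_transpose_mul_revMatrix hR'
    hflip.symm
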